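/- arXiv:1304.2585 — 2 statements merged into one kernel-verified Lean document; each statement's English description precedes it below -/
import Mathlib

section
/- Let d ≥ 3 and n ≥ 0, and let p be a real homogeneous polynomial of degree n in d variables. Then the polynomial Σ_{j=0}^{⌊n/2⌋} (1/(4^j j! (−n + 2 − d/2)_j)) ‖x‖^{2j} (Δ^j p)(x) is harmonic and homogeneous of degree n, and it differs from p by an element of ‖x‖² P_{n−2}^d; that is, it equals the orthogonal projection of p onto H_n^d in the decomposition P_n^d = H_n^d ⊕ ‖x‖² P_{n−2}^d. Here (a)_j = a(a+1)⋯(a+j−1) is the Pochhammer symbol, ‖x‖^{2j} denotes the polynomial (x_1²+⋯+x_d²)^j, and Δ^j is the j-th iterate of the Laplacian. -/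
/-!
For `q` homogeneous of degree `m`, Euler's identity `Σ xᵢ ∂ᵢq = m q` gives
`Δ(‖x‖^{2j+2} q) = 2(j+1)(2j+2m+d) ‖x‖^{2j} q + ‖x‖^{2j+2} Δq`.
Applied to `q = Δ^{j+1} p` (degree `n - 2j - 2`), the first summand is `-4(j+1)(a+j)` times
`‖x‖^{2j} Δ^{j+1} p`, where `a = -n + 2 - d/2`. The coefficients `c_j = 1/(4^j j! (a)_j)` satisfy
`c_{j+1} · 4(j+1)(a+j) = c_j`, so the Laplacian of the sum `Σ c_j ‖x‖^{2j} Δ^j p` telescopes to a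
multiple of `Δ^{⌊n/2⌋+1} p`, which vanishes for degree reasons. Every summand except `p` itself is
divisible by `‖x‖²`. For `d > 0` and `2(j+1) ≤ n` the factors `a + j` are negative, hence nonzero.
-/

open MeasureTheory MvPolynomial Metric

/-- The polynomial Laplacian `Δ = ∂₁² + ⋯ + ∂_d²` as a linear map. -/
noncomputable def polyLaplacian (d : ℕ) : MvPolynomial (Fin d) ℝ →ₗ[ℝ] MvPolynomial (Fin d) ℝ :=
  ∑ i : Fin d, ((pderiv i).toLinearMap ∘ₗ (pderiv i).toLinearMap)

/-- A polynomial is harmonic if it is annihilated by the Laplacian. -/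
def IsHarmonic {d : ℕ} (p : MvPolynomial (Fin d) ℝ) : Prop := polyLaplacian d p = 0

/-- The polynomial `‖x‖² = x₁² + ⋯ + x_d²`. -/
noncomputable def normSqPoly (d : ℕ) : MvPolynomial (Fin d) ℝ := ∑ i : Fin d, X i ^ 2

/-- The explicit candidate for the orthogonal projection of `p` onto `H_n^d`:
`Σ_{j=0}^{⌊n/2⌋} (1/(4^j j! (−n+2−d/2)_j)) ‖x‖^{2j} Δ^j p`. -/
noncomputable def harmonicProjection (d n : ℕ) (p : MvPolynomial (Fin d) ℝ) :
    MvPolynomial (Fin d) ℝ :=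
  ∑ j ∈ Finset.range (n / 2 + 1),
    MvPolynomial.C
      (1 / (4 ^ j * (j.factorial : ℝ) * (ascPochhammer ℝ j).eval (-(n : ℝ) + 2 - (d : ℝ) / 2))) *
      (normSqPoly d ^ j * ((polyLaplacian d ^ j) p))

lemma MvPolynomial.IsHomogeneous.pderiv_eq_zero {σ R : Type*} [CommSemiring R]
    {p : MvPolynomial σ R} (hp : p.IsHomogeneous 0) (i : σ) : pderiv i p = 0 := by
  rw [← totalDegree_zero_iff_isHomogeneous, totalDegree_eq_zero_iff_eq_C] at hp
  rw [hp, pderiv_C]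

lemma MvPolynomial.IsHomogeneous.smul {σ R : Type*} [CommSemiring R] {p : MvPolynomial σ R}
    {n : ℕ} (hp : p.IsHomogeneous n) (r : R) : (r • p).IsHomogeneous n := by
  rw [smul_eq_C_mul]
  exact hp.C_mul r

section

variable {d : ℕ}

lemma polyLaplacian_apply (p : MvPolynomial (Fin d) ℝ) :
    polyLaplacian d p = ∑ i, pderiv i (pderiv i p) := by
  simp [polyLaplacian, LinearMap.sum_apply]

lemma isHomogeneous_normSqPoly : (normSqPoly d).IsHomogeneous 2 :=
  IsHomogeneous.sum _ _ _ fun i _ ↦ (isHomogeneous_X ℝ i).pow 2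

lemma pderiv_normSqPoly (i : Fin d) : pderiv i (normSqPoly d) = 2 * X i := by
  simp [normSqPoly, Pi.single_apply]

namespace MvPolynomial.IsHomogeneous

variable {p : MvPolynomial (Fin d) ℝ} {n : ℕ}

lemma polyLaplacian (hp : p.IsHomogeneous n) :
    (_root_.polyLaplacian d p).IsHomogeneous (n - 2) := by
  rw [polyLaplacian_apply]
  exact IsHomogeneous.sum _ _ _ fun i _ ↦ hp.pderiv.pderiv

lemma polyLaplacian_pow (hp : p.IsHomogeneous n) (j : ℕ) :
    ((_root_.polyLaplacian d ^ j) p).IsHomogeneous (n - 2 * j) := by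
  induction j with
  | zero => simpa using hp
  | succ j ih =>
    rw [pow_succ', Module.End.mul_apply, mul_add_one, ← Nat.sub_sub]
    exact ih.polyLaplacian

lemma polyLaplacian_eq_zero (hp : p.IsHomogeneous n) (hn : n < 2) :
    _root_.polyLaplacian d p = 0 := by
  have hp' : ∀ i, (pderiv i p).IsHomogeneous 0 := fun i ↦ by
    simpa [show n - 1 = 0 by omega] using hp.pderiv (i := i)
  simp [polyLaplacian_apply, fun i ↦ (hp' i).pderiv_eq_zero i]

lemma polyLaplacian_pow_eq_zero (hp : p.IsHomogeneous n) {j : ℕ} (hj : n < 2 * j) :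
    (_root_.polyLaplacian d ^ j) p = 0 := by
  obtain ⟨k, rfl⟩ : ∃ k, j = k + 1 := Nat.exists_eq_add_one.mpr (by omega)
  rw [pow_succ', Module.End.mul_apply]
  exact (hp.polyLaplacian_pow k).polyLaplacian_eq_zero (by omega)

lemma normSqPoly_pow_mul_polyLaplacian_pow (hp : p.IsHomogeneous n) (j k : ℕ) :
    (normSqPoly d ^ j * (_root_.polyLaplacian d ^ k) p).IsHomogeneous (2 * j + (n - 2 * k)) := by
  simpa [mul_comm j] using (isHomogeneous_normSqPoly.pow j).mul (hp.polyLaplacian_pow k)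

end MvPolynomial.IsHomogeneous

lemma polyLaplacian_normSqPoly_mul {q : MvPolynomial (Fin d) ℝ} {m : ℕ} (hq : q.IsHomogeneous m) :
    polyLaplacian d (normSqPoly d * q) =
      (2 * d + 4 * m : ℝ) • q + normSqPoly d * polyLaplacian d q := by
  have hi : ∀ i, pderiv i (pderiv i (normSqPoly d * q)) =
      2 * q + 4 * (X i * pderiv i q) + normSqPoly d * pderiv i (pderiv i q) := fun i ↦ by
    have h2 : pderiv i (2 : MvPolynomial (Fin d) ℝ) = 0 := (pderiv i).map_natCast 2
    simp only [pderiv_mul, map_add, pderiv_normSqPoly, pderiv_X_self, h2]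
    ring
  rw [polyLaplacian_apply, polyLaplacian_apply, Finset.sum_congr rfl fun i _ ↦ hi i]
  simp only [Finset.sum_add_distrib, ← Finset.mul_sum, hq.sum_X_mul_pderiv, Finset.sum_const,
    Finset.card_fin, smul_eq_C_mul, nsmul_eq_mul, map_add, map_mul, map_natCast, map_ofNat]
  ring

lemma polyLaplacian_normSqPoly_pow_succ_mul {q : MvPolynomial (Fin d) ℝ} {m : ℕ}
    (hq : q.IsHomogeneous m) (j : ℕ) :
    polyLaplacian d (normSqPoly d ^ (j + 1) * q) =
      (2 * (j + 1) * (2 * j + 2 * m + d) : ℝ) • (normSqPoly d ^ j * q) +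
        normSqPoly d ^ (j + 1) * polyLaplacian d q := by
  induction j with
  | zero =>
    rw [zero_add, pow_one, pow_zero, one_mul, polyLaplacian_normSqPoly_mul hq]
    congr 2
    push_cast
    ring
  | succ j ih =>
    have hdeg : (normSqPoly d ^ (j + 1) * q).IsHomogeneous (2 * (j + 1) + m) :=
      (isHomogeneous_normSqPoly.pow _).mul hq
    rw [pow_succ', mul_assoc, polyLaplacian_normSqPoly_mul hdeg, ih]
    simp only [smul_eq_C_mul, map_add, map_mul, map_natCast, map_ofNat, map_one, Nat.cast_add,
      Nat.cast_mul, Nat.cast_ofNat, Nat.cast_one]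
    ring

end

noncomputable def harmonicCoeff (a : ℝ) (j : ℕ) : ℝ :=
  1 / (4 ^ j * (j.factorial : ℝ) * (ascPochhammer ℝ j).eval a)

lemma harmonicCoeff_zero (a : ℝ) : harmonicCoeff a 0 = 1 := by
  simp [harmonicCoeff]

-- Unconditional: if `a + j = 0`, both sides are `0` because `x / 0 = 0`.
lemma harmonicCoeff_succ (a : ℝ) (j : ℕ) :
    harmonicCoeff a (j + 1) = harmonicCoeff a j / (4 * (j + 1) * (a + j)) := by
  rw [harmonicCoeff, harmonicCoeff, div_div, ascPochhammer_succ_eval, Nat.factorial_succ]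
  push_cast
  ring

lemma harmonicCoeff_succ_mul (a : ℝ) (j : ℕ) (h : a + j ≠ 0) :
    harmonicCoeff a (j + 1) * (4 * (j + 1) * (a + j)) = harmonicCoeff a j := by
  rw [harmonicCoeff_succ, div_mul_cancel₀]
  exact mul_ne_zero (mul_ne_zero four_ne_zero (Nat.cast_add_one_ne_zero j)) h

lemma harmonicProjection_eq_sum (d n : ℕ) (p : MvPolynomial (Fin d) ℝ) :
    harmonicProjection d n p = ∑ j ∈ Finset.range (n / 2 + 1),
      harmonicCoeff (-(n : ℝ) + 2 - (d : ℝ) / 2) j •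
        (normSqPoly d ^ j * (polyLaplacian d ^ j) p) := by
  simp only [harmonicProjection, harmonicCoeff, smul_eq_C_mul]

section

variable {d n : ℕ} {p : MvPolynomial (Fin d) ℝ}

lemma polyLaplacian_harmonicCoeff_smul_succ (hd : 0 < d) (hp : p.IsHomogeneous n) {j : ℕ}
    (hj : 2 * (j + 1) ≤ n) :
    polyLaplacian d (harmonicCoeff (-(n : ℝ) + 2 - (d : ℝ) / 2) (j + 1) •
        (normSqPoly d ^ (j + 1) * (polyLaplacian d ^ (j + 1)) p)) =
      harmonicCoeff (-(n : ℝ) + 2 - (d : ℝ) / 2) (j + 1) •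
          (normSqPoly d ^ (j + 1) * (polyLaplacian d ^ (j + 2)) p) -
        harmonicCoeff (-(n : ℝ) + 2 - (d : ℝ) / 2) j •
          (normSqPoly d ^ j * (polyLaplacian d ^ (j + 1)) p) := by
  set a : ℝ := -(n : ℝ) + 2 - (d : ℝ) / 2 with ha
  have hne : a + j ≠ 0 := by
    have : (2 * (j + 1) : ℝ) ≤ n := by exact_mod_cast hj
    have : (0 : ℝ) < d := by exact_mod_cast hd
    linarith
  have hcoeff : harmonicCoeff a (j + 1) * (2 * (j + 1) * (2 * j + 2 * ↑(n - 2 * (j + 1)) + d)) =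
      -harmonicCoeff a j := by
    rw [← harmonicCoeff_succ_mul a j hne, Nat.cast_sub hj]
    push_cast
    ring
  rw [map_smul, polyLaplacian_normSqPoly_pow_succ_mul (hp.polyLaplacian_pow (j + 1)),
    ← Module.End.mul_apply, ← pow_succ', smul_add, smul_smul, hcoeff, neg_smul]
  abel

lemma isHarmonic_harmonicProjection (hd : 0 < d) (hp : p.IsHomogeneous n) :
    IsHarmonic (harmonicProjection d n p) := by
  set c := harmonicCoeff (-(n : ℝ) + 2 - (d : ℝ) / 2)
  set g : ℕ → MvPolynomial (Fin d) ℝ :=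
    fun j ↦ c j • (normSqPoly d ^ j * (polyLaplacian d ^ (j + 1)) p)
  have hstep : ∀ j ∈ Finset.range (n / 2),
      polyLaplacian d (c (j + 1) • (normSqPoly d ^ (j + 1) * (polyLaplacian d ^ (j + 1)) p)) =
        g (j + 1) - g j := fun j hj ↦
    polyLaplacian_harmonicCoeff_smul_succ hd hp (by rw [Finset.mem_range] at hj; omega)
  have hlast : g (n / 2) = 0 := by
    simp [g, hp.polyLaplacian_pow_eq_zero (j := n / 2 + 1) (by omega)]
  rw [IsHarmonic, harmonicProjection_eq_sum, map_sum, Finset.sum_range_succ',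
    Finset.sum_congr rfl hstep, Finset.sum_range_sub, hlast]
  simp [g, c, harmonicCoeff_zero]

lemma MvPolynomial.IsHomogeneous.harmonicProjection (hp : p.IsHomogeneous n) :
    (_root_.harmonicProjection d n p).IsHomogeneous n := by
  rw [harmonicProjection_eq_sum]
  refine IsHomogeneous.sum _ _ _ fun j hj ↦ IsHomogeneous.smul ?_ _
  have h := hp.normSqPoly_pow_mul_polyLaplacian_pow j j
  rwa [show 2 * j + (n - 2 * j) = n by rw [Finset.mem_range] at hj; omega] at h

end

lemma sub_harmonicProjection_eq (d n : ℕ) (p : MvPolynomial (Fin d) ℝ) :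
    p - harmonicProjection d n p = normSqPoly d * -∑ j ∈ Finset.range (n / 2),
      harmonicCoeff (-(n : ℝ) + 2 - (d : ℝ) / 2) (j + 1) •
        (normSqPoly d ^ j * (polyLaplacian d ^ (j + 1)) p) := by
  simp only [harmonicProjection_eq_sum, Finset.sum_range_succ' _ (n / 2), harmonicCoeff_zero,
    pow_zero, one_smul, one_mul, Module.End.one_apply, mul_neg, Finset.mul_sum, mul_smul_comm,
    ← mul_assoc, ← pow_succ']
  abel

/-- The explicit formula gives the harmonic component of a homogeneous polynomial `p` of
degree `n` in the decomposition `P_n^d = H_n^d ⊕ ‖x‖² P_{n−2}^d`. -/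
theorem harmonicProjection_spec (d n : ℕ) (hd : 3 ≤ d)
    (p : MvPolynomial (Fin d) ℝ) (hp : p.IsHomogeneous n) :
    IsHarmonic (harmonicProjection d n p) ∧
    (harmonicProjection d n p).IsHomogeneous n ∧
    ∃ s : MvPolynomial (Fin d) ℝ, s.IsHomogeneous (n - 2) ∧
      p - harmonicProjection d n p = normSqPoly d * s := by
  refine ⟨isHarmonic_harmonicProjection (by omega) hp, hp.harmonicProjection, _, ?_,
    sub_harmonicProjection_eq d n p⟩
  refine (IsHomogeneous.sum _ _ _ fun j hj ↦ IsHomogeneous.smul ?_ _).neg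
  have h := hp.normSqPoly_pow_mul_polyLaplacian_pow j (j + 1)
  rwa [show 2 * j + (n - 2 * (j + 1)) = n - 2 by rw [Finset.mem_range] at hj; omega] at h
end

section
/- Let d ≥ 2 and n ≥ 0, and let r_n^d = binom(n+d−1, n). There exist points ξ_1, …, ξ_{r_n^d} ∈ S^{d-1} such that for every real polynomial f in d variables of total degree at most n, there exist real univariate polynomials p_1, …, p_{r_n^d} with f(x) = Σ_{j=1}^{r_n^d} p_j(⟨x, ξ_j⟩) for all x ∈ ℝ^d. -/
/-!
The space `H_m` of forms of degree `m` in `d` variables has dimension `C(m+d-1, m)`, so one can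
choose `r = C(n+d-1, n)` points `ξ_j` on the sphere at which no nonzero form of `H_n` vanishes
simultaneously (a form vanishing on the sphere vanishes everywhere, by homogeneity). Multiplying
by a power of `X_0` shows that the same points work for every `H_m` with `m ≤ n`.

By duality the powers `⟨ξ_j, X⟩^m` then span `H_m`. A functional `φ` is represented on `H_m` by
the form `q_φ = ∑_s multinomial(s) φ(X^s) X^s`, which satisfies `q_φ(v) = φ(⟨v, X⟩^m)` by the
multinomial theorem; if `φ` kills every `⟨ξ_j, X⟩^m`, then `q_φ` vanishes at every `ξ_j`, so
`q_φ = 0` and `φ` vanishes on `H_m`. Writing `f` as the sum of its homogeneous components and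
each component as a combination of the `⟨ξ_j, X⟩^m` gives `f = ∑_j p_j(⟨ξ_j, X⟩)`.
-/

open MvPolynomial Metric

theorem Module.Dual.exists_fin_subfamily_separating {K M ι : Type*} [Field K] [AddCommGroup M]
    [Module K M] [Nonempty ι] (φ : ι → Module.Dual K M) {V : Submodule K M} [FiniteDimensional K V]
    {k : ℕ} (hk : Module.finrank K V ≤ k) (hφ : ∀ v ∈ V, (∀ i, φ i v = 0) → v = 0) :
    ∃ s : Fin k → ι, ∀ v ∈ V, (∀ j, φ (s j) v = 0) → v = 0 := by
  induction k generalizing V with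
  | zero =>
    have hV : V = ⊥ := Submodule.finrank_eq_zero.mp (Nat.le_zero.mp hk)
    exact ⟨Fin.elim0, fun v hv _ => by simpa [hV] using hv⟩
  | succ k ih =>
    obtain rfl | hV := eq_or_ne V ⊥
    · exact ⟨fun _ => Classical.arbitrary ι, fun v hv _ => by simpa using hv⟩
    obtain ⟨v₀, hv₀V, hv₀⟩ := Submodule.exists_mem_ne_zero_of_ne_bot hV
    obtain ⟨i₀, hi₀⟩ : ∃ i, φ i v₀ ≠ 0 := by
      by_contra! h
      exact hv₀ (hφ v₀ hv₀V h)
    set V' := V ⊓ LinearMap.ker (φ i₀)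
    have hlt : V' < V := lt_of_le_of_ne inf_le_left fun h => hi₀ (h ▸ hv₀V : v₀ ∈ V').2
    have : FiniteDimensional K V' := Submodule.finiteDimensional_of_le hlt.le
    have hV' : Module.finrank K V' ≤ k := by
      have := Submodule.finrank_lt_finrank_of_lt hlt
      omega
    obtain ⟨s, hs⟩ := ih hV' fun v hv h => hφ v hv.1 h
    exact ⟨Fin.cons i₀ s, fun v hv h => hs v ⟨hv, h 0⟩ fun j => by simpa using h j.succ⟩

namespace MvPolynomial

variable {R σ : Type*}

section CommSemiring

variable [CommSemiring R]

noncomputable def linearForm [Fintype σ] (v : σ → R) : MvPolynomial σ R := ∑ i, v i • X i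

@[simp]
lemma eval_linearForm [Fintype σ] (x v : σ → R) : eval x (linearForm v) = ∑ i, v i * x i := by
  simp [linearForm, smul_eval]

lemma isHomogeneous_linearForm_pow [Fintype σ] (v : σ → R) (m : ℕ) :
    (linearForm v ^ m).IsHomogeneous m := by
  have h : linearForm v ∈ homogeneousSubmodule σ R 1 :=
    Submodule.sum_mem _ fun i _ => Submodule.smul_mem _ _ (isHomogeneous_X R i)
  simpa using h.pow m

lemma eval_polynomial_aeval (x : σ → R) (q : MvPolynomial σ R) (p : Polynomial R) :
    eval x (Polynomial.aeval q p) = p.eval (eval x q) := by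
  simpa [coe_aeval_eq_eval] using (Polynomial.aeval_algHom_apply (aeval x) q p).symm

lemma IsHomogeneous.eval_smul {p : MvPolynomial σ R} {m : ℕ} (hp : p.IsHomogeneous m) (c : R)
    (x : σ → R) : eval (c • x) p = c ^ m * eval x p := by
  induction hp using IsWeightedHomogeneous.induction_on with
  | zero => simp
  | add p q _ _ hp hq => simp [hp, hq, mul_add]
  | monomial s a hs =>
    have hdeg : ∑ i ∈ s.support, s i = m := by
      rwa [← Finsupp.degree_apply, Finsupp.degree_eq_weight_one]
    simp only [eval_monomial, Pi.smul_apply, smul_eq_mul, mul_pow, Finsupp.prod_mul]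
    rw [Finsupp.prod, Finset.prod_pow_eq_pow_sum, hdeg]
    ring

lemma sum_coeff_smul_monomial_of_isHomogeneous [Fintype σ] [DecidableEq σ]
    {p : MvPolynomial σ R} {m : ℕ} (hp : p.IsHomogeneous m) :
    ∑ s ∈ Finset.univ.finsuppAntidiag m, coeff s p • monomial s (1 : R) = p := by
  calc ∑ s ∈ Finset.univ.finsuppAntidiag m, coeff s p • monomial s (1 : R)
      = ∑ s ∈ Finset.univ.finsuppAntidiag m, monomial s (coeff s p) :=
        Finset.sum_congr rfl fun s _ => by rw [smul_monomial, smul_eq_mul, mul_one]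
    _ = ∑ s ∈ p.support, monomial s (coeff s p) := by
        refine (Finset.sum_subset (fun s hs => ?_) fun s _ hs => ?_).symm
        · rw [Finset.mem_finsuppAntidiag, ← Finsupp.degree_eq_sum, Finsupp.degree_eq_weight_one]
          exact ⟨hp (mem_support_iff.mp hs), Finset.subset_univ _⟩
        · rw [notMem_support_iff.mp hs, monomial_zero]
    _ = p := p.as_sum.symm

lemma exists_sum_aeval_eq_of_le_span {ι : Type*} [Fintype ι] (ℓ : ι → MvPolynomial σ R) {n : ℕ}
    (h : ∀ m ≤ n, homogeneousSubmodule σ R m ≤ Submodule.span R (Set.range fun j => ℓ j ^ m))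
    {f : MvPolynomial σ R} (hf : f.totalDegree ≤ n) :
    ∃ p : ι → Polynomial R, ∑ j, Polynomial.aeval (ℓ j) (p j) = f := by
  classical
  let L : (ι → Polynomial R) →ₗ[R] MvPolynomial σ R :=
    ∑ j, (Polynomial.aeval (ℓ j)).toLinearMap ∘ₗ LinearMap.proj j
  have hpow : ∀ m, Submodule.span R (Set.range fun j => ℓ j ^ m) ≤ LinearMap.range L := by
    refine fun m => Submodule.span_le.mpr ?_
    rintro _ ⟨j, rfl⟩
    exact ⟨Pi.single j (Polynomial.X ^ m), by simp [L, Pi.single_apply, apply_ite]⟩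
  have hfL : f ∈ LinearMap.range L := by
    rw [← sum_homogeneousComponent f]
    refine Submodule.sum_mem _ fun m hm => hpow m (h m ?_ (homogeneousComponent_isHomogeneous m f))
    have := Finset.mem_range.mp hm
    omega
  obtain ⟨p, hp⟩ := hfL
  exact ⟨p, by simpa [L] using hp⟩

def IsUniquenessSet {ι : Type*} (ξ : ι → σ → R) (V : Submodule R (MvPolynomial σ R)) : Prop :=
  ∀ q ∈ V, (∀ j, eval (ξ j) q = 0) → q = 0

end CommSemiring

lemma IsUniquenessSet.homogeneousSubmodule_of_le [CommRing R] [IsDomain R] [Nonempty σ]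
    {ι : Type*} {ξ : ι → σ → R} {m n : ℕ} (h : IsUniquenessSet ξ (homogeneousSubmodule σ R n))
    (hmn : m ≤ n) : IsUniquenessSet ξ (homogeneousSubmodule σ R m) := by
  intro q hq hξ
  obtain ⟨i⟩ := ‹Nonempty σ›
  have hqX : q * X i ^ (n - m) ∈ homogeneousSubmodule σ R n := by
    simpa [Nat.add_sub_cancel' hmn] using hq.mul (isHomogeneous_X_pow i (n - m))
  have := h _ hqX fun j => by rw [map_mul, hξ j, zero_mul]
  exact (mul_eq_zero.mp this).resolve_right (pow_ne_zero _ (X_ne_zero i))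

instance [CommSemiring R] [Finite σ] (m : ℕ) : Module.Finite R (homogeneousSubmodule σ R m) :=
  Module.Finite.iff_fg.mpr (homogeneousSubmodule_fg σ R m)

section Field

variable {K : Type*} [Field K] [Fintype σ]

lemma finrank_homogeneousSubmodule (m : ℕ) :
    Module.finrank K (homogeneousSubmodule σ K m) = (Fintype.card σ + m - 1).choose m := by
  classical
  have hS : {s : σ →₀ ℕ | s.degree = m} = ↑(Finset.univ.finsuppAntidiag m : Finset (σ →₀ ℕ)) := by
    ext s
    simp [Finsupp.degree_eq_sum]
  rw [homogeneousSubmodule_eq_finsupp_supported, hS,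
    (AddMonoidAlgebra.supportedEquivFinsupp _).finrank_eq, Module.finrank_finsupp_self]
  simp [Finset.card_finsuppAntidiag_nat_eq_choose]

noncomputable def dualPolynomial [DecidableEq σ] (φ : Module.Dual K (MvPolynomial σ K)) (m : ℕ) :
    MvPolynomial σ K :=
  ∑ s ∈ Finset.univ.finsuppAntidiag m, (s.multinomial * φ (monomial s 1)) • monomial s 1

variable [DecidableEq σ] (φ : Module.Dual K (MvPolynomial σ K)) (m : ℕ)

lemma dualPolynomial_mem_homogeneousSubmodule :
    dualPolynomial φ m ∈ homogeneousSubmodule σ K m := by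
  refine Submodule.sum_mem _ fun s hs => Submodule.smul_mem _ _ (isHomogeneous_monomial _ ?_)
  rw [Finsupp.degree_eq_sum]
  exact (Finset.mem_finsuppAntidiag.mp hs).1

lemma eval_dualPolynomial (v : σ → K) : eval v (dualPolynomial φ m) = φ (linearForm v ^ m) := by
  rw [← sum_coeff_smul_monomial_of_isHomogeneous (isHomogeneous_linearForm_pow v m),
    dualPolynomial, map_sum, map_sum]
  refine Finset.sum_congr rfl fun s hs => ?_
  rw [linearForm, coeff_linearCombination_X_pow_of_fintype,
    if_pos (Finset.mem_finsuppAntidiag'.mp hs).1, smul_eval, eval_monomial, map_smul, smul_eq_mul]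
  ring

lemma map_eq_zero_of_dualPolynomial_eq_zero [CharZero K] (h : dualPolynomial φ m = 0)
    {f : MvPolynomial σ K} (hf : f ∈ homogeneousSubmodule σ K m) : φ f = 0 := by
  have hli : LinearIndependent K fun s : σ →₀ ℕ => monomial s (1 : K) := by
    simpa using (basisMonomials σ K).linearIndependent
  have hcoeff := linearIndependent_iff'.mp hli _ _ h
  rw [← sum_coeff_smul_monomial_of_isHomogeneous hf, map_sum]
  refine Finset.sum_eq_zero fun s hs => ?_
  have hmult : (s.multinomial : K) ≠ 0 := by
    simpa [Finsupp.multinomial_eq] using (Nat.multinomial_pos s.support s).ne'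
  rw [map_smul, (mul_eq_zero.mp (hcoeff s hs)).resolve_left hmult, smul_zero]

end Field

lemma IsUniquenessSet.homogeneousSubmodule_le_span_linearForm_pow {K : Type*} [Field K]
    [CharZero K] [Fintype σ] {ι : Type*} {ξ : ι → σ → K} {m : ℕ}
    (h : IsUniquenessSet ξ (homogeneousSubmodule σ K m)) :
    homogeneousSubmodule σ K m ≤ Submodule.span K (Set.range fun j => linearForm (ξ j) ^ m) := by
  classical
  rw [← Subspace.dualAnnihilator_le_dualAnnihilator_iff]
  intro φ hφ
  rw [Submodule.mem_dualAnnihilator] at hφ ⊢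
  have hzero : dualPolynomial φ m = 0 :=
    h _ (dualPolynomial_mem_homogeneousSubmodule φ m) fun j => by
      rw [eval_dualPolynomial]
      exact hφ _ (Submodule.subset_span ⟨j, rfl⟩)
  exact fun f hf => map_eq_zero_of_dualPolynomial_eq_zero φ m hzero hf

section Sphere

variable [Fintype σ] [Nonempty σ]

lemma IsHomogeneous.eq_zero_of_forall_eval_sphere_eq_zero {p : MvPolynomial σ ℝ} {m : ℕ}
    (hp : p.IsHomogeneous m)
    (h : ∀ x ∈ sphere (0 : EuclideanSpace ℝ σ) 1, eval (fun i => x i) p = 0) : p = 0 := by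
  classical
  refine MvPolynomial.funext fun y => ?_
  set x : EuclideanSpace ℝ σ := WithLp.toLp 2 y
  obtain ⟨u, hu, hxu⟩ : ∃ u ∈ sphere (0 : EuclideanSpace ℝ σ) 1, x = ‖x‖ • u := by
    obtain hx | hx := eq_or_ne x 0
    · obtain ⟨i⟩ := ‹Nonempty σ›
      exact ⟨EuclideanSpace.single i 1, by simp, by simp [hx]⟩
    · exact ⟨‖x‖⁻¹ • x, by simp [norm_smul, hx], by simp [smul_smul, hx]⟩
  have hy : y = ‖x‖ • fun i => u i := congrArg WithLp.ofLp hxu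
  rw [hy, hp.eval_smul, h u hu, mul_zero, map_zero]

lemma exists_isUniquenessSet_sphere {n k : ℕ} (hk : (Fintype.card σ + n - 1).choose n ≤ k) :
    ∃ ξ : Fin k → sphere (0 : EuclideanSpace ℝ σ) 1,
      IsUniquenessSet (fun j i => (ξ j : EuclideanSpace ℝ σ) i) (homogeneousSubmodule σ ℝ n) := by
  classical
  obtain ⟨i⟩ := ‹Nonempty σ›
  have : Nonempty (sphere (0 : EuclideanSpace ℝ σ) 1) := ⟨⟨EuclideanSpace.single i 1, by simp⟩⟩
  let evalAt (x : sphere (0 : EuclideanSpace ℝ σ) 1) : Module.Dual ℝ (MvPolynomial σ ℝ) :=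
    (aeval fun i => (x : EuclideanSpace ℝ σ) i).toLinearMap
  refine Module.Dual.exists_fin_subfamily_separating evalAt
    ((finrank_homogeneousSubmodule n).trans_le hk) fun q hq h => ?_
  exact hq.eq_zero_of_forall_eval_sphere_eq_zero fun x hx => by
    simpa [evalAt, coe_aeval_eq_eval] using h ⟨x, hx⟩

end Sphere

end MvPolynomial

/-- There exist points `ξ_1, …, ξ_r` on the sphere (`r = C(n+d−1, n)`) such that every
polynomial of total degree at most `n` can be written as `Σ_j p_j(⟨x, ξ_j⟩)` for some
univariate polynomials `p_j`. -/
theorem exists_ridge_decomposition (d n : ℕ) (hd : 2 ≤ d) :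
    ∃ ξ : Fin ((n + d - 1).choose n) → sphere (0 : EuclideanSpace ℝ (Fin d)) 1,
      ∀ f : MvPolynomial (Fin d) ℝ, f.totalDegree ≤ n →
        ∃ p : Fin ((n + d - 1).choose n) → Polynomial ℝ,
          ∀ x : EuclideanSpace ℝ (Fin d),
            MvPolynomial.eval (fun i => x i) f =
              ∑ j, (p j).eval (∑ i, x i * (ξ j : EuclideanSpace ℝ (Fin d)) i) := by
  have : Nonempty (Fin d) := ⟨⟨0, by omega⟩⟩
  obtain ⟨ξ, hξ⟩ := exists_isUniquenessSet_sphere (σ := Fin d) (n := n)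
    (by rw [Fintype.card_fin, add_comm])
  refine ⟨ξ, fun f hf => ?_⟩
  obtain ⟨p, hp⟩ := exists_sum_aeval_eq_of_le_span
    (fun j => linearForm fun i => (ξ j : EuclideanSpace ℝ (Fin d)) i)
    (fun m hm => (hξ.homogeneousSubmodule_of_le hm).homogeneousSubmodule_le_span_linearForm_pow) hf
  refine ⟨p, fun x => ?_⟩
  simp only [← hp, map_sum, eval_polynomial_aeval, eval_linearForm, mul_comm]
end
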